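/- arXiv:2012.12744 — 2 statements merged into one kernel-verified Lean document; each statement's English description precedes it below -/
import Mathlib

section
/- Let k be a field and let N be a finitely generated k[x]-module annihilated by some power of x. Let v be a nonzero element of N with xv = 0, let m be the largest integer such that v ∈ x^{m-1}N, and let v' ∈ N satisfy v = x^{m-1}v'. Then the cyclic k[x]-submodule generated by v' is a direct summand of N and is isomorphic to k[x]/(x^m). -/
/-!
Write `N ≅ ⨁ᵢ k[x]/(xᵉⁱ)`. If in every coordinate where `v = x^(m-1) v'` is nonzero the component
of `v'` were divisible by `x`, then `v` would lie in `xᵐN`, against the maximality of `m`. So some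
coordinate `i` carries a nonzero component of `v` and a component `u` of `v'` prime to `x`: `u`
generates `k[x]/(xᵉⁱ)`, and `xᵐ⁻¹u ≠ 0` gives `eᵢ ≥ m`. Hence the projection to coordinate `i` maps
`k[x]v'` isomorphically onto `k[x]/(xᵉⁱ)`, its kernel is a complement of `k[x]v'`, and the
annihilator of `v'` is `(xᵐ)`.
-/

open Submodule
open scoped DirectSum

namespace LinearMap

variable {R M Q : Type*} [Ring R] [AddCommGroup M] [Module R M] [AddCommGroup Q] [Module R Q]

theorem isCompl_ker_of_bijective_domRestrict {p : Submodule R M} (f : M →ₗ[R] Q)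
    (hf : Function.Bijective (f.domRestrict p)) : IsCompl p (ker f) := by
  let e := LinearEquiv.ofBijective _ hf
  have hproj : ∀ x : p, (e.symm.toLinearMap ∘ₗ f) x = x := fun x => e.symm_apply_apply x
  simpa only [LinearEquiv.ker_comp] using isCompl_of_proj hproj

theorem torsionOf_le_torsionOf_apply (f : M →ₗ[R] Q) (w : M) :
    Ideal.torsionOf R M w ≤ Ideal.torsionOf R Q (f w) := fun c hc => by
  rw [Ideal.mem_torsionOf_iff] at hc ⊢
  rw [← map_smul, hc, map_zero]

theorem bijective_domRestrict_span_singleton (f : M →ₗ[R] Q) (w : M) (htop : R ∙ f w = ⊤)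
    (hle : Ideal.torsionOf R Q (f w) ≤ Ideal.torsionOf R M w) :
    Function.Bijective (f.domRestrict (R ∙ w)) := by
  constructor
  · rw [← ker_eq_bot, eq_bot_iff]
    rintro ⟨_, hx⟩ hfx
    obtain ⟨c, rfl⟩ := mem_span_singleton.mp hx
    have : c • f w = 0 := by simpa using hfx
    simpa using hle this
  · intro y
    obtain ⟨c, rfl⟩ := mem_span_singleton.mp (htop ▸ mem_top : y ∈ R ∙ f w)
    exact ⟨⟨c • w, smul_mem _ c (mem_span_singleton_self w)⟩, by simp⟩

end LinearMap

section CoprimeQuotient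

variable {R : Type*} [CommRing R] {a s : R}

theorem span_singleton_mk_eq_top_of_isCoprime (h : IsCoprime a s) :
    R ∙ (Submodule.Quotient.mk s : R ⧸ R ∙ a) = ⊤ := by
  obtain ⟨x, y, hxy⟩ := h
  refine eq_top_iff.mpr fun b _ => ?_
  obtain ⟨b, rfl⟩ := Submodule.Quotient.mk_surjective _ b
  refine mem_span_singleton.mpr ⟨b * y, ?_⟩
  rw [← Submodule.Quotient.mk_smul, Submodule.Quotient.eq, smul_eq_mul, mem_span_singleton]
  exact ⟨-(b * x), by linear_combination (-b) * hxy⟩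

theorem Ideal.torsionOf_mk_eq_span_of_isCoprime (h : IsCoprime a s) :
    Ideal.torsionOf R (R ⧸ R ∙ a) (Submodule.Quotient.mk s) = Ideal.span {a} := by
  ext c
  rw [Ideal.mem_torsionOf_iff, ← Submodule.Quotient.mk_smul, Submodule.Quotient.mk_eq_zero,
    smul_eq_mul, Ideal.mem_span_singleton, Ideal.mem_span_singleton]
  exact ⟨h.dvd_of_dvd_mul_right, fun hc => hc.mul_right s⟩

end CoprimeQuotient

theorem Irreducible.exists_isCoprime_pow_mk_eq {R : Type*} [CommRing R] [IsBezout R] {p : R}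
    (hp : Irreducible p) {E : ℕ} {u : R ⧸ R ∙ p ^ E} (hu : ∀ y, p • y ≠ u) :
    ∃ s, IsCoprime (p ^ E) s ∧ Submodule.Quotient.mk s = u := by
  obtain ⟨s, rfl⟩ := Submodule.Quotient.mk_surjective _ u
  refine ⟨s, IsCoprime.pow_left ((hp.coprime_iff_not_dvd).mpr ?_), rfl⟩
  rintro ⟨t, rfl⟩
  exact hu (Submodule.Quotient.mk t) (Submodule.Quotient.mk_smul _ p t).symm

theorem DirectSum.exists_apply_ne_zero_and_forall_smul_ne {ι R : Type*} [Fintype ι] [Semiring R]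
    {M : ι → Type*} [∀ i, AddCommMonoid (M i)] [∀ i, Module R (M i)] (r : R) (n : ℕ)
    {x x' : ⨁ i, M i} (hx : x = r ^ n • x') (hx_not : ¬ ∃ z, x = r ^ (n + 1) • z) :
    ∃ i, x i ≠ 0 ∧ ∀ y, r • y ≠ x' i := by
  by_contra! h
  have hcomp : ∀ i, ∃ z, x i = r ^ (n + 1) • z := by
    intro i
    by_cases hi : x i = 0
    · exact ⟨0, by rw [hi, smul_zero]⟩
    obtain ⟨y, hy⟩ := h i hi
    exact ⟨y, by rw [hx, DirectSum.smul_apply, ← hy, smul_smul, ← pow_succ]⟩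
  choose z hz using hcomp
  exact hx_not ⟨DFinsupp.equivFunOnFintype.symm z, by ext i; rw [hz, DirectSum.smul_apply]; rfl⟩

open Polynomial in
theorem socle_generator_gives_direct_summand_general
    (k : Type) [Field k] (N : Type) [AddCommGroup N] [Module (Polynomial k) N]
    (hfg : Module.Finite (Polynomial k) N)
    (hnil : ∃ n : ℕ, ∀ y : N, (X : Polynomial k) ^ n • y = 0)
    (v : N) (hsoc : (X : Polynomial k) • v = 0)
    (m : ℕ) (hm : 1 ≤ m)
    (hmax : ∀ j : ℕ, (∃ z : N, v = (X : Polynomial k) ^ j • z) → j ≤ m - 1)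
    (v' : N) (hv' : v = (X : Polynomial k) ^ (m - 1) • v') :
    (∃ q : Submodule (Polynomial k) N,
        IsCompl (Submodule.span (Polynomial k) {v'}) q) ∧
      Nonempty ((↥(Submodule.span (Polynomial k) ({v'} : Set N))) ≃ₗ[Polynomial k]
        (Polynomial k ⧸ Ideal.span ({(X : Polynomial k) ^ m} : Set (Polynomial k)))) := by
  obtain ⟨n, hn⟩ := hnil
  obtain ⟨d, E, ⟨g⟩⟩ := Module.torsion_by_prime_power_decomposition irreducible_X
    (fun y => ⟨⟨X ^ n, n, rfl⟩, hn y⟩ : Module.IsTorsion' N (Submonoid.powers (X : k[X])))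
  have hgv_not : ¬ ∃ z, g v = (X : k[X]) ^ (m - 1 + 1) • z := by
    rintro ⟨z, hz⟩
    have := hmax (m - 1 + 1) ⟨g.symm z, by rw [← map_smul, ← hz, g.symm_apply_apply]⟩
    omega
  obtain ⟨i, hvi, hv'i⟩ := DirectSum.exists_apply_ne_zero_and_forall_smul_ne X (m - 1)
    (by rw [hv', map_smul]) hgv_not
  let f := DirectSum.component k[X] _ _ i ∘ₗ g.toLinearMap
  obtain ⟨s, hcop, hs⟩ := irreducible_X.exists_isCoprime_pow_mk_eq hv'i
  have htors : Ideal.torsionOf k[X] _ (f v') = Ideal.span {X ^ E i} :=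
    hs ▸ Ideal.torsionOf_mk_eq_span_of_isCoprime hcop
  have hmE : m ≤ E i := by
    by_contra! hlt
    have hgvi : g v i = (X : k[X]) ^ (m - 1) • f v' := by rw [hv', map_smul]; rfl
    have hmem : (X : k[X]) ^ (m - 1) ∈ Ideal.torsionOf k[X] _ (f v') :=
      htors ▸ Ideal.mem_span_singleton.mpr (pow_dvd_pow X (by omega))
    exact hvi (hgvi.trans hmem)
  have hle : Ideal.torsionOf k[X] _ (f v') ≤ Ideal.span {X ^ m} :=
    htors ▸ Ideal.span_singleton_le_span_singleton.mpr (pow_dvd_pow X hmE)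
  have hXm : (X : k[X]) ^ m • v' = 0 := by
    rw [← Nat.sub_add_cancel hm, pow_succ', mul_smul, ← hv', hsoc]
  have heq : Ideal.torsionOf k[X] N v' = Ideal.span {X ^ m} :=
    le_antisymm ((f.torsionOf_le_torsionOf_apply v').trans hle)
      ((Ideal.span_singleton_le_iff_mem _).mpr hXm)
  have hbij := f.bijective_domRestrict_span_singleton v'
    (hs ▸ span_singleton_mk_eq_top_of_isCoprime hcop) (hle.trans heq.ge)
  exact ⟨⟨LinearMap.ker f, f.isCompl_ker_of_bijective_domRestrict hbij⟩,
    ⟨(Ideal.quotTorsionOfEquivSpanSingleton _ _ v').symm ≪≫ₗ quotEquivOfEq _ _ heq⟩⟩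

open Polynomial in
/-- Lemma 2.1: if `v ≠ 0` is in the socle of a finitely generated nilpotent `k[x]`-module `N`,
`m` is the largest integer with `v ∈ x^{m-1}N`, and `v = x^{m-1}v'`, then the cyclic submodule
generated by `v'` is a direct summand of `N` isomorphic to `k[x]/(x^m)`. -/
theorem socle_generator_gives_direct_summand
    (k : Type) [Field k] (N : Type) [AddCommGroup N] [Module (Polynomial k) N]
    (hfg : Module.Finite (Polynomial k) N)
    (hnil : ∃ n : ℕ, ∀ y : N, (X : Polynomial k) ^ n • y = 0)
    (v : N) (hv : v ≠ 0) (hsoc : (X : Polynomial k) • v = 0)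
    (m : ℕ) (hm : 1 ≤ m)
    (hdvd : ∃ z : N, v = (X : Polynomial k) ^ (m - 1) • z)
    (hmax : ∀ j : ℕ, (∃ z : N, v = (X : Polynomial k) ^ j • z) → j ≤ m - 1)
    (v' : N) (hv' : v = (X : Polynomial k) ^ (m - 1) • v') :
    (∃ q : Submodule (Polynomial k) N,
        IsCompl (Submodule.span (Polynomial k) {v'}) q) ∧
      Nonempty ((↥(Submodule.span (Polynomial k) ({v'} : Set N))) ≃ₗ[Polynomial k]
        (Polynomial k ⧸ Ideal.span ({(X : Polynomial k) ^ m} : Set (Polynomial k)))) :=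
  socle_generator_gives_direct_summand_general k N hfg hnil v hsoc m hm hmax v' hv'
end

section
/- Let n ≥ 2 and let k be a finite field with q elements. For every partition λ, the number of k[x]-submodules U of N_λ(k) with U ≅ N_{(1^{n-1})}(k) and N_λ(k)/U ≅ N_{(1)}(k) equals (q^n − 1)/(q − 1) if λ = (1^n), equals 1 if λ = (2,1^{n-2}), and equals 0 otherwise. -/
noncomputable section

namespace BirkhoffMod

/-- The Hall number `F^Y_{X,Z}`: the number of submodules `U ⊆ Y` with `U ≅ X` and
`Y/U ≅ Z`. -/
def hallPair (A : Type) [Ring A] (X Z Y : Type)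
    [AddCommGroup X] [Module A X] [AddCommGroup Z] [Module A Z]
    [AddCommGroup Y] [Module A Y] : ℕ :=
  Nat.card {U : Submodule A Y //
    Nonempty (U ≃ₗ[A] X) ∧ Nonempty ((Y ⧸ U) ≃ₗ[A] Z)}

/-- The Hall number `F^Y_{X₁,X₂,X₃}`: the number of chains `0 ⊆ U₁ ⊆ U₂ ⊆ Y` with
`U₁ ≅ X₁`, `U₂/U₁ ≅ X₂` and `Y/U₂ ≅ X₃`. -/
def hallTriple (A : Type) [Ring A] (X₁ X₂ X₃ Y : Type)
    [AddCommGroup X₁] [Module A X₁] [AddCommGroup X₂] [Module A X₂]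
    [AddCommGroup X₃] [Module A X₃] [AddCommGroup Y] [Module A Y] : ℕ :=
  Nat.card {p : Submodule A Y × Submodule A Y //
    p.1 ≤ p.2 ∧ Nonempty (p.1 ≃ₗ[A] X₁) ∧
    Nonempty ((↥p.2 ⧸ (p.1.comap p.2.subtype)) ≃ₗ[A] X₂) ∧
    Nonempty ((Y ⧸ p.2) ≃ₗ[A] X₃)}

/-- The Hall number `F^Y_{X_1,…,X_t}`: the number of chains of submodules
`0 = U_0 ⊆ U_1 ⊆ … ⊆ U_t = Y` with `U_i/U_{i-1} ≅ X_i` for all `i`. -/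
def hallChain (A : Type) [Ring A] {t : ℕ} (X : Fin t → Type)
    [∀ i, AddCommGroup (X i)] [∀ i, Module A (X i)]
    (Y : Type) [AddCommGroup Y] [Module A Y] : ℕ :=
  Nat.card {U : Fin (t + 1) → Submodule A Y //
    Monotone U ∧ U 0 = ⊥ ∧ U (Fin.last t) = ⊤ ∧
    ∀ i : Fin t,
      Nonempty ((↥(U i.succ) ⧸ ((U i.castSucc).comap (U i.succ).subtype)) ≃ₗ[A] X i)}

/-- The number of injective `A`-module homomorphisms `M → N`, i.e. `|Mon_A(M,N)|`. -/
def monCount (A : Type) [Ring A] (M N : Type)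
    [AddCommGroup M] [Module A M] [AddCommGroup N] [Module A N] : ℕ :=
  Nat.card {f : M →ₗ[A] N // Function.Injective f}

section Nilpotent

variable (k : Type) [Field k]

/-- The shift operator on `Fin m → k`, modelling multiplication by `x` on
`k[x]/(x^m)` in the basis `1, x, …, x^{m-1}`. -/
def shiftL (m : ℕ) : (Fin m → k) →ₗ[k] (Fin m → k) where
  toFun v i :=
    if h : 0 < (i : ℕ) then v ⟨(i : ℕ) - 1, lt_of_le_of_lt (Nat.sub_le _ _) i.isLt⟩ else 0
  map_add' u v := by
    funext i
    by_cases h : 0 < (i : ℕ) <;> simp [h]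
  map_smul' c v := by
    funext i
    by_cases h : 0 < (i : ℕ) <;> simp [h]

/-- Componentwise linear map between pi types. -/
def piMapL {ι : Type} {M N : ι → Type} [∀ i, AddCommGroup (M i)] [∀ i, Module k (M i)]
    [∀ i, AddCommGroup (N i)] [∀ i, Module k (N i)] (g : ∀ i, M i →ₗ[k] N i) :
    (∀ i, M i) →ₗ[k] (∀ i, N i) :=
  LinearMap.pi (fun i => (g i).comp (LinearMap.proj i))

/-- The nilpotent `k[x]`-module `N_λ(k) = ⊕ᵢ k[x]/(x^{λᵢ})` attached to a partition given
as a list `l = (λ₁, …, λ_s)`; `x` acts by the shift on each summand. -/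
def NRep (l : List ℕ) : Type :=
  Module.AEval' (piMapL k (fun i : Fin l.length => shiftL k (l.get i)))

instance (l : List ℕ) : AddCommGroup (NRep k l) := by
  unfold NRep; infer_instance

instance (l : List ℕ) : Module (Polynomial k) (NRep k l) := by
  unfold NRep; infer_instance

end Nilpotent

end BirkhoffMod

/-!
Write `N_λ(k)` as `V = ⊕ᵢ k^{λᵢ}` with `x` acting by the nilpotent shift `φ`. A submodule
`U` with `U ≅ N_{(1^{n-1})}` and `N_λ/U ≅ N_{(1)}` is exactly a `k`-subspace of dimension
`n - 1` and codimension `1` with `range φ ≤ U ≤ ker φ` (such a subspace is automatically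
`φ`-stable). If `φ = 0`, i.e. `λ = (1ⁿ)`, these are all hyperplanes of `kⁿ`, i.e. the points
of the projective space of the dual, and there are `(qⁿ - 1)/(q - 1)` of them. Otherwise
`U = ker φ` is forced, and it qualifies iff `φ² = 0` and `dim ker φ = n - 1`. As `dim ker φ`
is the number of parts of `λ` and `dim V = |λ| = n`, exactly one part equals `2`, i.e.
`λ = (2,1^{n-2})`.
-/

open Polynomial Module LinearMap BirkhoffMod

namespace BirkhoffMod

section Hyperplanes

variable {k V : Type} [Field k] [AddCommGroup V] [Module k V]

def sandwichedHyperplanes (φ : Module.End k V) (m : ℕ) : Set (Submodule k V) :=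
  {p | range φ ≤ p ∧ p ≤ ker φ ∧ finrank k p = m ∧ finrank k (V ⧸ p) = 1}

variable [FiniteDimensional k V]

theorem card_hyperplanes [Finite k] :
    Nat.card {p : Submodule k V // finrank k (V ⧸ p) = 1} =
      ∑ i ∈ Finset.range (finrank k V), Nat.card k ^ i := by
  let e : {p : Submodule k V // finrank k (V ⧸ p) = 1} ≃
      {H : Submodule k (Dual k V) // finrank k H = 1} :=
    (Subspace.orderIsoFiniteDimensional.toEquiv.trans OrderDual.ofDual).subtypeEquiv fun p => by
      change _ ↔ finrank k p.dualAnnihilator = 1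
      rw [← (Submodule.dualQuotEquivDualAnnihilator p).finrank_eq, Subspace.dual_finrank_eq]
  rw [Nat.card_congr (e.trans (Projectivization.equivSubmodule k (Dual k V)).symm),
    Projectivization.card_of_finrank k (Dual k V) Subspace.dual_finrank_eq]

theorem finrank_eq_of_mem_sandwichedHyperplanes {φ : Module.End k V} {m : ℕ}
    {p : Submodule k V} (hp : p ∈ sandwichedHyperplanes φ m) : finrank k V = m + 1 := by
  rw [← p.finrank_quotient_add_finrank, hp.2.2.1, hp.2.2.2, add_comm]

theorem card_sandwichedHyperplanes_zero [Finite k] (m : ℕ) :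
    Nat.card (sandwichedHyperplanes (0 : Module.End k V) m) =
      if finrank k V = m + 1 then ∑ i ∈ Finset.range (m + 1), Nat.card k ^ i else 0 := by
  split_ifs with hV
  · have hS : sandwichedHyperplanes (0 : Module.End k V) m = {p | finrank k (V ⧸ p) = 1} := by
      ext p
      have := p.finrank_quotient_add_finrank
      simp only [sandwichedHyperplanes, range_zero, ker_zero, bot_le, le_top, true_and,
        Set.mem_ofPred_eq]
      omega
    rw [hS, ← hV]
    exact card_hyperplanes
  · rw [Nat.card_eq_zero]
    exact Or.inl ⟨fun ⟨_, hp⟩ => hV (finrank_eq_of_mem_sandwichedHyperplanes hp)⟩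

theorem eq_ker_of_mem_sandwichedHyperplanes {φ : Module.End k V} (hφ : φ ≠ 0) {m : ℕ}
    {p : Submodule k V} (hp : p ∈ sandwichedHyperplanes φ m) : p = ker φ := by
  have hker : finrank k (ker φ) < finrank k V :=
    Submodule.finrank_lt (by simpa [LinearMap.ker_eq_top] using hφ)
  refine Submodule.eq_of_le_of_finrank_le hp.2.1 ?_
  rw [hp.2.2.1]
  have := finrank_eq_of_mem_sandwichedHyperplanes hp
  omega

open Classical in
theorem card_sandwichedHyperplanes_of_ne_zero {φ : Module.End k V} (hφ : φ ≠ 0) (m : ℕ) :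
    Nat.card (sandwichedHyperplanes φ m) =
      if range φ ≤ ker φ ∧ finrank k (ker φ) = m ∧ finrank k V = m + 1 then 1 else 0 := by
  split_ifs with h
  · obtain ⟨hrange, hker, hV⟩ := h
    have hS : sandwichedHyperplanes φ m = {ker φ} := by
      refine Set.Subset.antisymm (fun p hp => eq_ker_of_mem_sandwichedHyperplanes hφ hp) ?_
      rw [Set.singleton_subset_iff]
      have := (ker φ).finrank_quotient_add_finrank
      exact ⟨hrange, le_rfl, hker, by omega⟩
    rw [hS, Nat.card_unique]
  · rw [Nat.card_eq_zero]
    refine Or.inl ⟨fun ⟨p, hp⟩ => h ?_⟩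
    obtain rfl := eq_ker_of_mem_sandwichedHyperplanes hφ hp
    exact ⟨hp.1, hp.2.2.1, finrank_eq_of_mem_sandwichedHyperplanes hp⟩

end Hyperplanes

section KilledByX

variable {k W W' : Type} [Field k]
  [AddCommGroup W] [Module k[X] W] [Module k W] [IsScalarTower k k[X] W]
  [AddCommGroup W'] [Module k[X] W'] [Module k W'] [IsScalarTower k k[X] W']

theorem smul_eq_coeff_zero_smul (hW : ∀ w : W, (X : k[X]) • w = 0) (f : k[X]) (w : W) :
    f • w = f.coeff 0 • w := by
  conv_lhs => rw [← X_mul_divX_add f]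
  rw [add_smul, mul_smul, hW, zero_add, ← algebraMap_eq, algebraMap_smul]

def polyLinearEquivOfXSMulEqZero (hW : ∀ w : W, (X : k[X]) • w = 0)
    (hW' : ∀ w : W', (X : k[X]) • w = 0) (e : W ≃ₗ[k] W') : W ≃ₗ[k[X]] W' :=
  { e with
    map_smul' := fun f w => by
      simp [smul_eq_coeff_zero_smul hW, smul_eq_coeff_zero_smul hW'] }

theorem nonempty_linearEquiv_iff_of_X_smul_eq_zero [FiniteDimensional k W]
    [FiniteDimensional k W'] (hW' : ∀ w : W', (X : k[X]) • w = 0) :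
    Nonempty (W ≃ₗ[k[X]] W') ↔
      (∀ w : W, (X : k[X]) • w = 0) ∧ finrank k W = finrank k W' := by
  refine ⟨fun ⟨e⟩ => ⟨fun w => e.injective ?_, (e.restrictScalars k).finrank_eq⟩,
    fun ⟨hW, hrank⟩ => ⟨polyLinearEquivOfXSMulEqZero hW hW' (.ofFinrankEq _ _ hrank)⟩⟩
  rw [map_smul, hW', map_zero]

end KilledByX

section AEval

variable {k V : Type} [Field k] [AddCommGroup V] [Module k V] (φ : Module.End k V)
  (p : (Algebra.lsmul k k V φ).invtSubmodule)

theorem X_smul_mapSubmodule_eq_zero_iff :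
    (∀ u : AEval.mapSubmodule k V φ p, (X : k[X]) • u = 0) ↔
      (p : Submodule k V) ≤ ker φ := by
  refine ⟨fun h v hv => ?_, fun h ⟨y, hy⟩ => Subtype.ext ?_⟩
  · have := congrArg Subtype.val (h ⟨AEval'.of φ v, by simpa using hv⟩)
    simpa [AEval.X_smul_of] using this
  · apply (AEval'.of φ).symm.injective
    simpa [AEval.of_symm_X_smul] using h ((AEval.mem_mapSubmodule_apply k V φ).1 hy)

theorem X_smul_quotient_mapSubmodule_eq_zero_iff :
    (∀ w : AEval' φ ⧸ AEval.mapSubmodule k V φ p, (X : k[X]) • w = 0) ↔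
      range φ ≤ (p : Submodule k V) := by
  refine ⟨fun h _ ⟨v, hv⟩ => ?_, fun h w => ?_⟩
  · have := h (Submodule.Quotient.mk (AEval'.of φ v))
    rw [← Submodule.Quotient.mk_smul, Submodule.Quotient.mk_eq_zero, AEval.X_smul_of] at this
    simpa [hv] using this
  · obtain ⟨y, rfl⟩ := Submodule.Quotient.mk_surjective _ w
    rw [← Submodule.Quotient.mk_smul, Submodule.Quotient.mk_eq_zero,
      AEval.mem_mapSubmodule_apply, AEval.of_symm_X_smul]
    exact h (mem_range_self φ _)

def quotientMapSubmoduleEquiv :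
    (V ⧸ (p : Submodule k V)) ≃ₗ[k] AEval' φ ⧸ AEval.mapSubmodule k V φ p :=
  (Submodule.Quotient.equiv _ _ (AEval'.of φ) (by ext; simp)).trans
    (Submodule.Quotient.restrictScalarsEquiv k _)

theorem X_smul_aeval_eq_zero_of_eq_zero {φ : Module.End k V} (hφ : φ = 0) (w : AEval' φ) :
    (X : k[X]) • w = 0 :=
  (AEval'.of φ).symm.injective (by simp [hφ])

variable [FiniteDimensional k V]

theorem hallPair_aeval_eq_card_sandwichedHyperplanes {W₁ W₂ : Type}
    [AddCommGroup W₁] [Module k[X] W₁] [Module k W₁] [IsScalarTower k k[X] W₁]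
    [FiniteDimensional k W₁] [AddCommGroup W₂] [Module k[X] W₂] [Module k W₂]
    [IsScalarTower k k[X] W₂] [FiniteDimensional k W₂]
    (h₁ : ∀ w : W₁, (X : k[X]) • w = 0) (h₂ : ∀ w : W₂, (X : k[X]) • w = 0)
    (hW₂ : finrank k W₂ = 1) :
    hallPair k[X] W₁ W₂ (AEval' φ) = Nat.card (sandwichedHyperplanes φ (finrank k W₁)) := by
  have hinv : ∀ p ∈ sandwichedHyperplanes φ (finrank k W₁),
      p ∈ (Algebra.lsmul k k V φ).invtSubmodule := fun p hp =>
    (Module.End.mem_invtSubmodule _).2 fun v hv =>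
      show φ v ∈ p from (mem_ker.1 (hp.2.1 hv)).symm ▸ p.zero_mem
  have key : ∀ p : (Algebra.lsmul k k V φ).invtSubmodule,
      (Nonempty (AEval.mapSubmodule k V φ p ≃ₗ[k[X]] W₁) ∧
        Nonempty ((AEval' φ ⧸ AEval.mapSubmodule k V φ p) ≃ₗ[k[X]] W₂)) ↔
      (p : Submodule k V) ∈ sandwichedHyperplanes φ (finrank k W₁) := by
    intro p
    have eU : (p : Submodule k V) ≃ₗ[k] AEval.mapSubmodule k V φ p :=
      AEval.equiv_mapSubmodule φ p.1 p.2
    have eQ := quotientMapSubmoduleEquiv φ p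
    have := Module.Finite.equiv eU
    have := Module.Finite.equiv eQ
    rw [nonempty_linearEquiv_iff_of_X_smul_eq_zero h₁,
      nonempty_linearEquiv_iff_of_X_smul_eq_zero h₂,
      X_smul_mapSubmodule_eq_zero_iff, X_smul_quotient_mapSubmodule_eq_zero_iff,
      ← eU.finrank_eq, ← eQ.finrank_eq, hW₂]
    simp only [sandwichedHyperplanes, Set.mem_ofPred_eq]
    tauto
  exact Nat.card_congr ((Equiv.subtypeSubtypeEquivSubtype (hinv _ ·)).symm.trans
    ((AEval.mapSubmodule k V φ).toEquiv.subtypeEquiv fun p => (key p).symm)).symm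

end AEval

section PiKernel

variable {k ι : Type} [Field k] {M N : ι → Type}
  [∀ i, AddCommGroup (M i)] [∀ i, Module k (M i)]
  [∀ i, AddCommGroup (N i)] [∀ i, Module k (N i)]

theorem ker_piMapL (g : ∀ i, M i →ₗ[k] N i) :
    ker (piMapL k g) = Submodule.pi Set.univ fun i => ker (g i) := by
  ext v
  simp [piMapL, funext_iff]

variable [Fintype ι] [DecidableEq ι] [∀ i, FiniteDimensional k (M i)]

theorem finrank_pi_univ (p : ∀ i, Submodule k (M i)) :
    finrank k (Submodule.pi Set.univ p) = ∑ i, finrank k (p i) := by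
  have hpi := (Submodule.pi Set.univ p).finrank_quotient_add_finrank
  rw [(Submodule.quotientPi p).finrank_eq, finrank_pi_fintype, finrank_pi_fintype] at hpi
  simp only [← Submodule.finrank_quotient_add_finrank (p _), Finset.sum_add_distrib] at hpi
  omega

end PiKernel

section Shift

variable (k : Type) [Field k]

theorem ker_shiftL_succ (m : ℕ) : ker (shiftL k (m + 1)) = ker (funLeft k k Fin.castSucc) := by
  ext v
  simp only [mem_ker, funext_iff, Fin.forall_fin_succ, Pi.zero_apply]
  exact ⟨fun h => h.2, fun h => ⟨rfl, h⟩⟩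

theorem finrank_ker_shiftL_succ (m : ℕ) : finrank k (ker (shiftL k (m + 1))) = 1 := by
  have := (funLeft k k (Fin.castSucc : Fin m → Fin (m + 1))).finrank_range_add_finrank_ker
  rw [range_eq_top.2 (funLeft_surjective_of_injective _ _ _ (Fin.castSucc_injective m)),
    finrank_top, finrank_fin_fun, finrank_fin_fun] at this
  rw [ker_shiftL_succ]
  omega

abbrev ShiftSpace (l : List ℕ) : Type := ∀ i : Fin l.length, Fin (l.get i) → k

abbrev shiftEnd (l : List ℕ) : Module.End k (ShiftSpace k l) :=
  piMapL k fun i => shiftL k (l.get i)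

instance (l : List ℕ) : Module k (NRep k l) := inferInstanceAs (Module k (AEval' (shiftEnd k l)))

instance (l : List ℕ) : IsScalarTower k k[X] (NRep k l) :=
  inferInstanceAs (IsScalarTower k k[X] (AEval' (shiftEnd k l)))

instance (l : List ℕ) : FiniteDimensional k (NRep k l) :=
  inferInstanceAs (FiniteDimensional k (AEval' (shiftEnd k l)))

theorem finrank_shiftSpace (l : List ℕ) : finrank k (ShiftSpace k l) = l.sum := by
  rw [finrank_pi_fintype]
  simp [Fin.sum_univ_getElem]

theorem finrank_NRep (l : List ℕ) : finrank k (NRep k l) = l.sum :=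
  (AEval'.of (shiftEnd k l)).finrank_eq.symm.trans (finrank_shiftSpace k l)

theorem finrank_ker_shiftEnd {l : List ℕ} (hpos : ∀ x ∈ l, 1 ≤ x) :
    finrank k (ker (shiftEnd k l)) = l.length := by
  have hker : ∀ m, 1 ≤ m → finrank k (ker (shiftL k m)) = 1
    | m + 1, _ => finrank_ker_shiftL_succ k m
  rw [ker_piMapL, finrank_pi_univ,
    Finset.sum_congr rfl fun i _ => hker _ (hpos _ (List.get_mem l i))]
  simp

theorem range_shiftEnd_le_ker {l : List ℕ} (h : ∀ x ∈ l, x ≤ 2) :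
    range (shiftEnd k l) ≤ ker (shiftEnd k l) := by
  rw [range_le_ker_iff]
  refine LinearMap.ext fun v => funext fun i => funext fun ⟨j, hj⟩ => ?_
  have := h _ (List.get_mem l i)
  simp only [List.get_eq_getElem, piMapL, shiftL, dite_eq_ite, coe_comp, Function.comp_apply,
    pi_apply, coe_mk, AddHom.coe_mk, coe_proj, Function.eval, tsub_pos_iff_lt, LinearMap.zero_apply,
    Pi.zero_apply, ite_eq_right_iff]
  intro _ _
  omega

theorem shiftEnd_eq_zero_iff {l : List ℕ} (hpos : ∀ x ∈ l, 1 ≤ x) :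
    shiftEnd k l = 0 ↔ l.length = l.sum := by
  rw [← ker_eq_top, Submodule.eq_top_iff_finrank_eq, finrank_ker_shiftEnd k hpos,
    finrank_shiftSpace]

theorem shiftEnd_replicate_one (m : ℕ) : shiftEnd k (List.replicate m 1) = 0 :=
  (shiftEnd_eq_zero_iff k fun x hx => (List.eq_of_mem_replicate hx).ge).2 (by simp)

theorem X_smul_NRep_replicate_one (m : ℕ) (w : NRep k (List.replicate m 1)) :
    (X : k[X]) • w = 0 :=
  X_smul_aeval_eq_zero_of_eq_zero (shiftEnd_replicate_one k m) w

theorem hallPair_NRep_eq_card_sandwichedHyperplanes (m : ℕ) (l : List ℕ) :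
    hallPair k[X] (NRep k (List.replicate m 1)) (NRep k [1]) (NRep k l) =
      Nat.card (sandwichedHyperplanes (shiftEnd k l) m) := by
  have h := hallPair_aeval_eq_card_sandwichedHyperplanes (shiftEnd k l)
    (W₁ := NRep k (List.replicate m 1)) (W₂ := NRep k [1])
    (X_smul_NRep_replicate_one k m) (X_smul_NRep_replicate_one k 1) (by simp [finrank_NRep])
  rwa [finrank_NRep, List.sum_replicate, smul_eq_mul, mul_one] at h

end Shift

section Partitions

theorem eq_replicate_one_of_sum_eq_length {l : List ℕ} (hpos : ∀ x ∈ l, 1 ≤ x)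
    (h : l.sum = l.length) : l = List.replicate l.length 1 := by
  refine List.eq_replicate_iff.2 ⟨rfl, ?_⟩
  induction l with
  | nil => simp
  | cons a t ih =>
    have ht := List.length_le_sum_of_one_le t fun x hx => hpos x (.tail a hx)
    have ha := hpos a (.head t)
    simp only [List.sum_cons, List.length_cons] at h
    simp only [List.mem_cons, forall_eq_or_imp]
    exact ⟨by omega, ih (fun x hx => hpos x (.tail a hx)) (by omega)⟩

theorem eq_two_cons_replicate_one_of_sum_eq_length_add_one {l : List ℕ}
    (hl : l.Pairwise (· ≥ ·)) (hpos : ∀ x ∈ l, 1 ≤ x) (h : l.sum = l.length + 1) :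
    l = 2 :: List.replicate (l.length - 1) 1 := by
  cases l with
  | nil => simp at h
  | cons a t =>
    have htpos : ∀ x ∈ t, 1 ≤ x := fun x hx => hpos x (.tail a hx)
    have ht := List.length_le_sum_of_one_le t htpos
    simp only [List.sum_cons, List.length_cons] at h
    have ha : a = 2 := by
      by_contra ha
      have hle : ∀ x ∈ t, x ≤ 1 := fun x hx => by
        have := (List.pairwise_cons.1 hl).1 x hx
        omega
      have := List.sum_le_card_nsmul t 1 hle
      simp only [smul_eq_mul, mul_one] at this
      omega
    subst ha
    rw [eq_replicate_one_of_sum_eq_length htpos (by omega)]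
    simp

end Partitions

end BirkhoffMod

/-- Lemma 4.4: for `n ≥ 2` and a finite field `k` with `q` elements, the number of
`k[x]`-submodules `U ⊆ N_λ(k)` with `U ≅ N_{(1^{n-1})}(k)` and `N_λ(k)/U ≅ N_{(1)}(k)`
is `(qⁿ-1)/(q-1) = 1 + q + … + q^{n-1}` if `λ = (1ⁿ)`, is `1` if `λ = (2,1^{n-2})`,
and is `0` otherwise. -/
theorem hall_number_one_column (n : ℕ) (hn : 2 ≤ n) (k : Type) [Field k] [Fintype k]
    (l : List ℕ) (hl : l.Pairwise (· ≥ ·)) (hpos : ∀ x ∈ l, 1 ≤ x) :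
    BirkhoffMod.hallPair (Polynomial k)
        (BirkhoffMod.NRep k (List.replicate (n - 1) 1))
        (BirkhoffMod.NRep k [1])
        (BirkhoffMod.NRep k l) =
      if l = List.replicate n 1 then ∑ i ∈ Finset.range n, Fintype.card k ^ i
      else if l = 2 :: List.replicate (n - 2) 1 then 1
      else 0 := by
  rw [hallPair_NRep_eq_card_sandwichedHyperplanes, ← Nat.card_eq_fintype_card]
  have hV := finrank_shiftSpace k l
  have hker := finrank_ker_shiftEnd k hpos
  have hφ := shiftEnd_eq_zero_iff k hpos
  split_ifs with hA hB
  · have hs : l.sum = n := by simp [hA]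
    have h0 : shiftEnd k l = 0 := by rw [hA]; exact shiftEnd_replicate_one k n
    rw [h0, card_sandwichedHyperplanes_zero, if_pos (by omega), Nat.sub_add_cancel (by omega)]
  · have hs : l.sum = n := by
      simp only [hB, List.sum_cons, List.sum_replicate, smul_eq_mul, mul_one]
      omega
    have hlen : l.length = n - 1 := by
      simp only [hB, List.length_cons, List.length_replicate]
      omega
    have h2 : ∀ x ∈ l, x ≤ 2 := fun x hx => by
      simp only [hB, List.mem_cons, List.mem_replicate] at hx
      omega
    rw [card_sandwichedHyperplanes_of_ne_zero (mt hφ.1 (by omega)),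
      if_pos ⟨range_shiftEnd_le_ker k h2, by omega, by omega⟩]
  · by_cases h0 : shiftEnd k l = 0
    · rw [h0, card_sandwichedHyperplanes_zero, if_neg]
      intro hs
      have hlen := hφ.1 h0
      rw [hV] at hs
      exact hA ((eq_replicate_one_of_sum_eq_length hpos hlen.symm).trans
        (congrArg (List.replicate · 1) (by omega)))
    · rw [card_sandwichedHyperplanes_of_ne_zero h0, if_neg]
      rintro ⟨-, hk, hs⟩
      exact hB ((eq_two_cons_replicate_one_of_sum_eq_length_add_one hl hpos (by omega)).trans
        (congrArg (2 :: List.replicate · 1) (by omega)))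
end
end
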